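/- There is a 2-player, 2-action, 1-state Markov game with horizon 2 and a non-Markov policy σ₂ for player 2 such that every Markov policy σ₁ of player 1 achieves value V₁^{σ₁×σ₂} = 1/2, while the best general (history-dependent) policy for player 1 achieves value max_{σ₁ ∈ Π₁^general} V₁^{σ₁×σ₂} = 3/4. -/

import Mathlib

/-! Player 2's step-1 action is uniform and is repeated at step 2, so the step-1 reward is
`1/4` in expectation whatever player 1 does, and the step-2 reward is `1/2` times the probability
that player 1's step-2 action matches it. A Markov policy cannot see player 2's action, so it
matches with probability exactly `1/2`; a history-dependent policy reads the action off the
step-1 reward and copies it, matching with probability `1`. -/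

/- The 2-player, 2-action, single-state Markov game with horizon 2 from
Proposition `nonmarkov-deviation`: actions are `Bool` (action "1" ↔ `true`).
Player 1's step-1 reward is `(1/2)·1[a₂ = 1]` and step-2 reward is
`(1/2)·1[a₁ = a₂]`.  Player 2 plays a uniformly random action at step 1 and
repeats the same action at step 2 (a non-Markov policy).

`V1Gen f1 f2` is player 1's expected total reward when player 1 plays a general
(history-dependent) policy: `f1` is the step-1 action distribution, and
`f2 a₁ r` is the step-2 action distribution given player 1's step-1 action `a₁`
and observed step-1 reward `r` (which reveals player 2's step-1 action). -/
noncomputable def V1Gen (f1 : Bool → ℝ) (f2 : Bool → ℝ → Bool → ℝ) : ℝ :=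
  ∑ b : Bool, (1 / 2 : ℝ) *
    ((1 / 2) * (if b then 1 else 0) +
      ∑ a1 : Bool, f1 a1 *
        ∑ a1' : Bool,
          f2 a1 ((1 / 2) * (if b then 1 else 0)) a1' *
            ((1 / 2) * (if a1' = b then 1 else 0)))

/-- Player 1's value when playing a Markov policy: step-2 distribution `m2` cannot
depend on the history. -/
noncomputable def V1Markov (m1 m2 : Bool → ℝ) : ℝ :=
  V1Gen m1 (fun _ _ => m2)

open Finset

noncomputable def stepOneReward (b : Bool) : ℝ := (1 / 2) * if b then 1 else 0

noncomputable def revealedAction (r : ℝ) : Bool := decide (r ≠ 0)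

theorem revealedAction_stepOneReward (b : Bool) : revealedAction (stepOneReward b) = b := by
  cases b <;> norm_num [revealedAction, stepOneReward]

/-- The probability that player 1's step-2 action is `b` when player 2 plays `b`. -/
noncomputable def matchProb (f1 : Bool → ℝ) (f2 : Bool → ℝ → Bool → ℝ) (b : Bool) : ℝ :=
  ∑ a, f1 a * f2 a (stepOneReward b) b

theorem V1Gen_eq_quarter_add (f1 : Bool → ℝ) (f2 : Bool → ℝ → Bool → ℝ) :
    V1Gen f1 f2 = 1 / 4 + 1 / 4 * ∑ b, matchProb f1 f2 b := by
  simp only [V1Gen, matchProb, stepOneReward, Fintype.sum_bool, Bool.false_eq_true,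
    Bool.true_eq_false, if_true, if_false]
  ring

theorem sum_matchProb_markov (f1 m2 : Bool → ℝ) :
    ∑ b, matchProb f1 (fun _ _ => m2) b = (∑ a, f1 a) * ∑ b, m2 b := by
  rw [sum_mul_sum, sum_comm]
  rfl

theorem sum_mul_le_one_of_mem_stdSimplex {𝕜 ι : Type*} [Fintype ι] [Semiring 𝕜] [PartialOrder 𝕜]
    [IsOrderedRing 𝕜] {p g : ι → 𝕜} (hp : p ∈ stdSimplex 𝕜 ι) (hg : ∀ i, g i ≤ 1) :
    ∑ i, p i * g i ≤ 1 :=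
  calc ∑ i, p i * g i ≤ ∑ i, p i := sum_le_sum fun i _ => mul_le_of_le_one_right (hp.1 i) (hg i)
    _ = 1 := hp.2

theorem matchProb_le_one {f1 : Bool → ℝ} {f2 : Bool → ℝ → Bool → ℝ} (hf1 : f1 ∈ stdSimplex ℝ Bool)
    (hf2 : ∀ a r, f2 a r ∈ stdSimplex ℝ Bool) (b : Bool) : matchProb f1 f2 b ≤ 1 :=
  sum_mul_le_one_of_mem_stdSimplex hf1 fun a => (mem_Icc_of_mem_stdSimplex (hf2 a _) b).2

theorem matchProb_copy {f1 : Bool → ℝ} (hf1 : ∑ a, f1 a = 1) (b : Bool) :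
    matchProb f1 (fun _ r => Pi.single (revealedAction r) 1) b = 1 := by
  simp only [matchProb, revealedAction_stepOneReward, Pi.single_eq_same, mul_one, hf1]

/-- There is a 2-player, 2-action, 1-state Markov game with horizon 2 and a non-Markov
policy `σ₂` for player 2 (hard-coded in `V1Gen`) such that every Markov policy of
player 1 achieves value exactly `1/2`, while the best general (history-dependent)
policy for player 1 achieves value `3/4`. -/
theorem markov_vs_nonmarkov_deviation :
    (∀ m1 m2 : Bool → ℝ,
        (∀ a, 0 ≤ m1 a) → (∑ a, m1 a = 1) → (∀ a, 0 ≤ m2 a) → (∑ a, m2 a = 1) →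
        V1Markov m1 m2 = 1 / 2)
    ∧ (∃ f1 : Bool → ℝ, ∃ f2 : Bool → ℝ → Bool → ℝ,
        (∀ a, 0 ≤ f1 a) ∧ (∑ a, f1 a = 1) ∧
        (∀ a r, (∀ a', 0 ≤ f2 a r a') ∧ (∑ a', f2 a r a' = 1)) ∧
        V1Gen f1 f2 = 3 / 4)
    ∧ (∀ (f1 : Bool → ℝ) (f2 : Bool → ℝ → Bool → ℝ),
        (∀ a, 0 ≤ f1 a) → (∑ a, f1 a = 1) →
        (∀ a r, (∀ a', 0 ≤ f2 a r a') ∧ (∑ a', f2 a r a' = 1)) →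
        V1Gen f1 f2 ≤ 3 / 4) := by
  refine ⟨fun m1 m2 _ hm1 _ hm2 => ?_, ?_, fun f1 f2 hf1 hsum hf2 => ?_⟩
  · rw [V1Markov, V1Gen_eq_quarter_add, sum_matchProb_markov, hm1, hm2]
    norm_num
  · have hpure := single_mem_stdSimplex ℝ true
    refine ⟨Pi.single true 1, fun _ r => Pi.single (revealedAction r) 1, hpure.1, hpure.2,
      fun _ _ => single_mem_stdSimplex ℝ _, ?_⟩
    simp only [V1Gen_eq_quarter_add, matchProb_copy hpure.2, Fintype.sum_bool]
    norm_num
  · have hmatch := matchProb_le_one ⟨hf1, hsum⟩ hf2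
    rw [V1Gen_eq_quarter_add, Fintype.sum_bool]
    linarith [hmatch true, hmatch false]
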